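/- For every 3-CNF formula ψ, the formula ψ is satisfiable if and only if there exists a well-defined valuation val of the Chonev pMC D_ψ such that Pr_{D_ψ[val]}(◇{T★}) = 1. -/
import Mathlib


/-- A finite path in state space `S`: a length `m` together with `m + 1` states. -/
abbrev MCPath (S : Type) : Type := Σ m : ℕ, Fin (m + 1) → S

/-- The mass of a path: the product of the transition probabilities along it. -/
def pathMass {S : Type} (P : S → S → ℝ) (π : MCPath S) : ℝ :=
  ∏ i : Fin π.1, P (π.2 i.castSucc) (π.2 i.succ)

/-- A hitting path from `s` to `T`: it starts in `s`, ends in `T`, and no proper prefix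
visits `T`. -/
def IsHitting {S : Type} (T : Set S) (s : S) (π : MCPath S) : Prop :=
  π.2 0 = s ∧ π.2 (Fin.last π.1) ∈ T ∧ ∀ i : Fin π.1, π.2 i.castSucc ∉ T

/-- The reachability probability `Pr_{P,s}(◇T)`: the sum of the masses of all hitting
paths from `s` to `T`. -/
noncomputable def reachProb {S : Type} (P : S → S → ℝ) (T : Set S) (s : S) : ℝ :=
  ∑' π : {π : MCPath S // IsHitting T s π}, pathMass P π.1

/-- A literal is a polarity (`true` = positive) together with a variable index. -/
abbrev Lit (k : ℕ) : Type := Bool × Fin k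

/-- Boolean evaluation of a literal under a Boolean assignment. -/
def litBool {k : ℕ} (σ : Fin k → Bool) (l : Lit k) : Bool :=
  if l.1 then σ l.2 else !(σ l.2)

/-- States of the Chonev pMC `D_ψ`: the states `v₀,…,v_k`, the literal states `x_i` and
`x̄_i`, the clause states `c₁,…,c_m`, the target `T★` and the sink `⊥`. -/
inductive CState (k m : ℕ) where
  | v : Fin (k + 1) → CState k m
  | pos : Fin k → CState k m
  | neg : Fin k → CState k m
  | clause : Fin m → CState k m
  | target : CState k m
  | sink : CState k m
deriving DecidableEq

/-- Parameters of the Chonev pMC: `x̃_i` for each variable and `y_{i,j}` for each clause `i`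
and literal position `j`. -/
inductive CParam (k m : ℕ) where
  | xt : Fin k → CParam k m
  | y : Fin m → Fin 3 → CParam k m
deriving DecidableEq

open MvPolynomial in
/-- Transition polynomials of the Chonev pMC `D_ψ` for a 3-CNF formula `ψ`. -/
noncomputable def chonevP (k m : ℕ) (ψ : Fin m → Fin 3 → Lit k) :
    CState k m → CState k m → MvPolynomial (CParam k m) ℚ
  | .v i, .pos a => if (i : ℕ) = (a : ℕ) then X (.xt a) else 0
  | .v i, .neg a => if (i : ℕ) = (a : ℕ) then 1 - X (.xt a) else 0
  | .v i, .clause _ => if (i : ℕ) = k then C ((1 : ℚ) / (m + 1)) else 0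
  | .v i, .target => if (i : ℕ) = k then C ((1 : ℚ) / (m + 1)) else 0
  | .pos a, .v i => if (i : ℕ) = (a : ℕ) + 1 then X (.xt a) else 0
  | .pos a, .sink => 1 - X (.xt a)
  | .neg a, .v i => if (i : ℕ) = (a : ℕ) + 1 then 1 - X (.xt a) else 0
  | .neg a, .sink => X (.xt a)
  | .clause i, .pos a => ∑ j : Fin 3, if ψ i j = (true, a) then X (.y i j) else 0
  | .clause i, .neg a => ∑ j : Fin 3, if ψ i j = (false, a) then X (.y i j) else 0
  | .target, .target => 1
  | .sink, .sink => 1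
  | _, _ => 0

/-- A valuation of the parameters of `D_ψ` is well-defined if all parameter values lie in
`[0,1]` and `y_{i,1} + y_{i,2} + y_{i,3} = 1` for every clause `i`. -/
def ChonevWD {k m : ℕ} (val : CParam k m → ℝ) : Prop :=
  (∀ p, val p ∈ Set.Icc (0 : ℝ) 1) ∧
  ∀ i : Fin m, val (.y i 0) + val (.y i 1) + val (.y i 2) = 1

namespace Chonev15
open scoped ENNReal NNReal Classical

variable {S : Type} [Fintype S] [DecidableEq S]

noncomputable def Q (p : S → S → ℝ≥0∞) (T : Set S) : ℕ → S → ℝ≥0∞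
  | 0, s => if s ∈ T then 1 else 0
  | (n+1), s => if s ∈ T then 0 else ∑ s' : S, p s s' * Q p T n s'

def hit (T : Set S) (n : ℕ) (s : S) (f : Fin (n+1) → S) : Prop :=
  f 0 = s ∧ f (Fin.last n) ∈ T ∧ ∀ i : Fin n, f i.castSucc ∉ T

noncomputable def emass (p : S → S → ℝ≥0∞) {n : ℕ} (f : Fin (n+1) → S) : ℝ≥0∞ :=
  ∏ i : Fin n, p (f i.castSucc) (f i.succ)

lemma hit_cons_iff (T : Set S) (n : ℕ) (s x : S) (g : Fin (n+1) → S) :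
    hit T (n+1) s (Fin.cons x g) ↔ x = s ∧ x ∉ T ∧ hit T n (g 0) g := by
  unfold hit
  constructor
  · rintro ⟨h0, hl, hni⟩
    refine ⟨h0, ?_, rfl, ?_, fun i => ?_⟩
    · have := hni 0; simpa using this
    · have : Fin.last (n+1) = (Fin.last n).succ := rfl
      rw [this, Fin.cons_succ] at hl; exact hl
    · have := hni i.succ
      rwa [← Fin.succ_castSucc, Fin.cons_succ] at this
  · rintro ⟨h0, hnT, _, hl, hni⟩
    refine ⟨h0, ?_, fun i => ?_⟩
    · have : Fin.last (n+1) = (Fin.last n).succ := rfl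
      rw [this, Fin.cons_succ]; exact hl
    · induction i using Fin.cases with
      | zero => simpa using hnT
      | succ j => rw [← Fin.succ_castSucc, Fin.cons_succ]; exact hni j

lemma emass_cons (p : S → S → ℝ≥0∞) (n : ℕ) (x : S) (g : Fin (n+1) → S) :
    emass p (Fin.cons x g : Fin (n+2) → S) = p x (g 0) * emass p g := by
  unfold emass
  rw [Fin.prod_univ_succ]
  simp only [Fin.castSucc_zero, Fin.cons_zero, Fin.cons_succ, ← Fin.succ_castSucc]

lemma Q_eq (p : S → S → ℝ≥0∞) (T : Set S) :
    ∀ (n : ℕ) (s : S), Q p T n s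
      = ∑ f : Fin (n+1) → S, if hit T n s f then emass p f else 0
  | 0, s => by
    rw [Fintype.sum_equiv (Equiv.funUnique (Fin 1) S)
      (fun f => if hit T 0 s f then emass p f else 0)
      (fun x => if x = s ∧ x ∈ T then 1 else 0)
      (fun f => by
        simp only [Equiv.funUnique_apply]
        have h1 : hit T 0 s f ↔ f 0 = s ∧ f 0 ∈ T := by
          unfold hit
          rw [show (Fin.last 0) = 0 from rfl]
          simp
        have h2 : emass p f = 1 := by simp [emass]
        rw [h2]
        by_cases h : hit T 0 s f
        · rw [if_pos h, if_pos]; exact h1.mp h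
        · rw [if_neg h, if_neg]; intro hc; exact h (h1.mpr hc))]
    simp only [ite_and]
    rw [Finset.sum_ite_eq' Finset.univ s (fun x => if x ∈ T then 1 else 0)]
    simp [Q]
  | (n+1), s => by
    have key := Q_eq p T n
    rw [← Fintype.sum_equiv (Fin.consEquiv (fun _ : Fin (n+2) => S))
      (fun xg : S × (Fin (n+1) → S) =>
        if xg.1 = s ∧ xg.1 ∉ T ∧ hit T n (xg.2 0) xg.2
        then p xg.1 (xg.2 0) * emass p xg.2 else 0)
      (fun f => if hit T (n+1) s f then emass p f else 0)
      (fun xg => by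
        rcases xg with ⟨x, g⟩
        dsimp only
        have e1 : (Fin.consEquiv (fun _ : Fin (n+2) => S)) (x, g) = Fin.cons x g := rfl
        rw [e1]
        by_cases h : hit T (n+1) s (Fin.cons x g)
        · rw [if_pos ((hit_cons_iff T n s x g).mp h), if_pos h, emass_cons]
        · rw [if_neg (fun hc => h ((hit_cons_iff T n s x g).mpr hc)), if_neg h])]
    rw [Fintype.sum_prod_type]
    simp only [ite_and]
    rw [Finset.sum_comm]
    rw [Finset.sum_congr rfl (fun g _ => Finset.sum_ite_eq' Finset.univ s
      (fun x => if x ∉ T then (if hit T n (g 0) g then p x (g 0) * emass p g else 0) else 0))]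
    simp only [Finset.mem_univ, if_true]
    by_cases hs : s ∈ T
    · simp [Q, hs]
    · simp only [hs, not_false_iff, if_true]
      rw [Q, if_neg hs]
      rw [Finset.sum_congr rfl (fun s' _ => by rw [key s', Finset.mul_sum])]
      rw [Finset.sum_comm]
      refine Finset.sum_congr rfl fun g _ => ?_
      have hpt : ∀ s' : S, p s s' * (if hit T n s' g then emass p g else 0)
          = if s' = g 0 then (if hit T n (g 0) g then p s (g 0) * emass p g else 0) else 0 := by
        intro s'
        by_cases h1 : s' = g 0
        · rw [h1]
          by_cases h2 : hit T n (g 0) g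
          · rw [if_pos rfl, if_pos h2, if_pos h2]
          · rw [if_pos rfl, if_neg h2, if_neg h2, mul_zero]
        · rw [if_neg (fun hc : hit T n s' g => h1 hc.1.symm), mul_zero, if_neg h1]
      rw [Finset.sum_congr rfl (fun s' _ => hpt s'),
        Finset.sum_ite_eq' Finset.univ (g 0)
          (fun s' => if hit T n (g 0) g then p s (g 0) * emass p g else 0),
        if_pos (Finset.mem_univ _)]

noncomputable def rP (p : S → S → ℝ≥0∞) (T : Set S) (s : S) : ℝ≥0∞ := ∑' n, Q p T n s

lemma partial_le_one (p : S → S → ℝ≥0∞) (T : Set S) (hrow : ∀ s, ∑ s' : S, p s s' = 1)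
    (N : ℕ) : ∀ s : S, ∑ n ∈ Finset.range (N+1), Q p T n s ≤ 1 := by
  induction N with
  | zero =>
    intro s
    rw [Finset.sum_range_one, Q]
    split <;> simp
  | succ N ih =>
    intro s
    rw [Finset.sum_range_succ']
    by_cases hs : s ∈ T
    · have h1 : ∀ n, Q p T (n+1) s = 0 := fun n => by rw [Q, if_pos hs]
      simp [h1, Q, hs]
    · have h1 : ∀ n, Q p T (n+1) s = ∑ s' : S, p s s' * Q p T n s' := fun n => by
        rw [Q, if_neg hs]
      rw [show Q p T 0 s = 0 by rw [Q, if_neg hs], add_zero]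
      rw [Finset.sum_congr rfl (fun n _ => h1 n), Finset.sum_comm]
      rw [Finset.sum_congr rfl (fun s' _ => (Finset.mul_sum _ _ _).symm)]
      calc ∑ s' : S, p s s' * ∑ n ∈ Finset.range (N+1), Q p T n s'
          ≤ ∑ s' : S, p s s' * 1 :=
            Finset.sum_le_sum fun s' _ => mul_le_mul_right (ih s') _
        _ = 1 := by simp [hrow s]

lemma rP_le_one (p : S → S → ℝ≥0∞) (T : Set S) (hrow : ∀ s, ∑ s' : S, p s s' = 1)
    (s : S) : rP p T s ≤ 1 := by
  refine Summable.tsum_le_of_sum_le ENNReal.summable fun F => ?_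
  obtain ⟨N, hN⟩ : ∃ N, F ⊆ Finset.range (N+1) :=
    ⟨F.sup id, fun x hx => Finset.mem_range.mpr (Nat.lt_succ_of_le (Finset.le_sup (f := id) hx))⟩
  exact le_trans (Finset.sum_le_sum_of_subset hN) (partial_le_one p T hrow N s)

lemma rP_mem (p : S → S → ℝ≥0∞) (T : Set S) (s : S) (hs : s ∈ T) : rP p T s = 1 := by
  rw [rP, tsum_eq_zero_add' ENNReal.summable]
  have h1 : ∀ n : ℕ, Q p T (n+1) s = 0 := fun n => by rw [Q, if_pos hs]
  simp [h1, Q, hs]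

lemma rP_notMem (p : S → S → ℝ≥0∞) (T : Set S) (s : S) (hs : s ∉ T) :
    rP p T s = ∑ s' : S, p s s' * rP p T s' := by
  rw [rP, tsum_eq_zero_add' ENNReal.summable]
  rw [show Q p T 0 s = 0 by rw [Q, if_neg hs], zero_add]
  have h1 : ∀ n : ℕ, Q p T (n+1) s = ∑ s' : S, p s s' * Q p T n s' := fun n => by
    rw [Q, if_neg hs]
  rw [tsum_congr h1, Summable.tsum_finsetSum (fun s' _ => ENNReal.summable)]
  exact Finset.sum_congr rfl fun s' _ => ENNReal.tsum_mul_left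

lemma rP_absorb (p : S → S → ℝ≥0∞) (T : Set S) (s : S) (hs : s ∉ T)
    (h : ∀ s', s' ≠ s → p s s' = 0) : rP p T s = 0 := by
  have hQ : ∀ n, Q p T n s = 0 := by
    intro n
    induction n with
    | zero => rw [Q, if_neg hs]
    | succ n ih =>
      rw [Q, if_neg hs]
      rw [Finset.sum_eq_single s (fun s' _ hne => by rw [h s' hne, zero_mul])
        (by intro h'; exact absurd (Finset.mem_univ s) h')]
      rw [ih, mul_zero]
  simp [rP, hQ]

lemma tsum_hitting_eq (P : S → S → ℝ) (T : Set S) (hnn : ∀ s s', 0 ≤ P s s') (s : S) :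
    ∑' π : {π : MCPath S // IsHitting T s π}, ENNReal.ofReal (pathMass P π.1)
      = rP (fun a b => ENNReal.ofReal (P a b)) T s := by
  set p : S → S → ℝ≥0∞ := fun a b => ENNReal.ofReal (P a b) with hp
  let e : {π : MCPath S // IsHitting T s π} ≃ (Σ n : ℕ, {f : Fin (n+1) → S // hit T n s f}) :=
    { toFun := fun x => ⟨x.1.1, ⟨x.1.2, x.2⟩⟩
      invFun := fun x => ⟨⟨x.1, x.2.1⟩, x.2.2⟩
      left_inv := fun ⟨⟨n, f⟩, h⟩ => rfl
      right_inv := fun ⟨n, f, h⟩ => rfl }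
  rw [← e.symm.tsum_eq (fun π : {π : MCPath S // IsHitting T s π} =>
    ENNReal.ofReal (pathMass P π.1))]
  have : ∀ x : Σ n : ℕ, {f : Fin (n+1) → S // hit T n s f},
      ENNReal.ofReal (pathMass P (e.symm x).1)
        = ENNReal.ofReal (∏ i : Fin x.1, P (x.2.1 i.castSucc) (x.2.1 i.succ)) := fun x => rfl
  rw [tsum_congr this, ENNReal.tsum_sigma'
    (fun x : Σ n : ℕ, {f : Fin (n+1) → S // hit T n s f} =>
      ENNReal.ofReal (∏ i : Fin x.1, P (x.2.1 i.castSucc) (x.2.1 i.succ)))]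
  refine tsum_congr fun n => ?_
  rw [tsum_fintype]
  calc ∑ x : {f : Fin (n+1) → S // hit T n s f},
        ENNReal.ofReal (∏ i : Fin n, P (x.1 i.castSucc) (x.1 i.succ))
      = ∑ x : {f : Fin (n+1) → S // hit T n s f}, emass p x.1 := by
        refine Finset.sum_congr rfl fun x _ => ?_
        rw [ENNReal.ofReal_prod_of_nonneg (fun i _ => hnn _ _)]
        rfl
    _ = ∑ f ∈ Finset.univ.filter (hit T n s), emass p f :=
        (Finset.sum_subtype _ (by simp) _).symm
    _ = ∑ f : Fin (n+1) → S, if hit T n s f then emass p f else 0 := Finset.sum_filter _ _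
    _ = Q p T n s := (Q_eq p T n s).symm

lemma reachProb_eq_toReal (P : S → S → ℝ) (T : Set S) (hnn : ∀ s s', 0 ≤ P s s') (s : S)
    (hne : rP (fun a b => ENNReal.ofReal (P a b)) T s ≠ ⊤) :
    reachProb P T s = (rP (fun a b => ENNReal.ofReal (P a b)) T s).toReal := by
  have hA := tsum_hitting_eq P T hnn s
  set g : {π : MCPath S // IsHitting T s π} → ℝ := fun π => pathMass P π.1 with hg
  have hgnn : ∀ π, 0 ≤ g π := fun π => Finset.prod_nonneg fun i _ => hnn _ _
  have hcoe : ∀ π, ENNReal.ofReal (g π) = ((g π).toNNReal : ℝ≥0∞) := fun π => rfl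
  have hne2 : (∑' π, ((g π).toNNReal : ℝ≥0∞)) ≠ ⊤ := by
    rw [← tsum_congr hcoe, hA]; exact hne
  have hsum : Summable (fun π => (g π).toNNReal) :=
    ENNReal.tsum_coe_ne_top_iff_summable.mp hne2
  have h1 : reachProb P T s = ∑' π, ((g π).toNNReal : ℝ) :=
    tsum_congr fun π => (Real.coe_toNNReal _ (hgnn π)).symm
  rw [h1, ← NNReal.coe_tsum]
  set t : ℝ≥0 := ∑' π, (g π).toNNReal with ht
  have h2 : rP (fun a b => ENNReal.ofReal (P a b)) T s = (t : ℝ≥0∞) := by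
    rw [ht, ENNReal.coe_tsum hsum, ← hA]
    exact tsum_congr fun π => (hcoe π).symm
  rw [h2, ENNReal.coe_toReal]

section Interface

variable (P : S → S → ℝ) (T : Set S)

lemma rowE (hnn : ∀ s s', 0 ≤ P s s') (hrow : ∀ s, ∑ s' : S, P s s' = 1) (s : S) :
    ∑ s' : S, ENNReal.ofReal (P s s') = 1 := by
  rw [← ENNReal.ofReal_sum_of_nonneg (fun s' _ => hnn s s'), hrow s, ENNReal.ofReal_one]

lemma rP_ne_top (hnn : ∀ s s', 0 ≤ P s s') (hrow : ∀ s, ∑ s' : S, P s s' = 1) (s : S) :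
    rP (fun a b => ENNReal.ofReal (P a b)) T s ≠ ⊤ :=
  (lt_of_le_of_lt (rP_le_one _ T (rowE P hnn hrow) s) ENNReal.one_lt_top).ne

lemma reach_eq (hnn : ∀ s s', 0 ≤ P s s') (hrow : ∀ s, ∑ s' : S, P s s' = 1) (s : S) :
    reachProb P T s = (rP (fun a b => ENNReal.ofReal (P a b)) T s).toReal :=
  reachProb_eq_toReal P T hnn s (rP_ne_top P T hnn hrow s)

lemma reach_nonneg (hnn : ∀ s s', 0 ≤ P s s') (s : S) : 0 ≤ reachProb P T s :=
  tsum_nonneg fun π => Finset.prod_nonneg fun i _ => hnn _ _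

lemma reach_le_one (hnn : ∀ s s', 0 ≤ P s s') (hrow : ∀ s, ∑ s' : S, P s s' = 1) (s : S) :
    reachProb P T s ≤ 1 := by
  rw [reach_eq P T hnn hrow s]
  calc (rP (fun a b => ENNReal.ofReal (P a b)) T s).toReal
      ≤ (1 : ℝ≥0∞).toReal :=
        ENNReal.toReal_mono ENNReal.one_ne_top (rP_le_one _ T (rowE P hnn hrow) s)
    _ = 1 := ENNReal.toReal_one

lemma reach_mem (hnn : ∀ s s', 0 ≤ P s s') (hrow : ∀ s, ∑ s' : S, P s s' = 1) (s : S)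
    (hs : s ∈ T) : reachProb P T s = 1 := by
  rw [reach_eq P T hnn hrow s, rP_mem _ T s hs, ENNReal.toReal_one]

lemma reach_step (hnn : ∀ s s', 0 ≤ P s s') (hrow : ∀ s, ∑ s' : S, P s s' = 1) (s : S)
    (hs : s ∉ T) : reachProb P T s = ∑ s' : S, P s s' * reachProb P T s' := by
  rw [reach_eq P T hnn hrow s, rP_notMem _ T s hs]
  rw [ENNReal.toReal_sum (fun s' _ => ENNReal.mul_ne_top ENNReal.ofReal_ne_top
    (rP_ne_top P T hnn hrow s'))]
  refine Finset.sum_congr rfl fun s' _ => ?_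
  rw [ENNReal.toReal_mul, ENNReal.toReal_ofReal (hnn s s'), ← reach_eq P T hnn hrow s']

lemma reach_absorb (hnn : ∀ s s', 0 ≤ P s s') (hrow : ∀ s, ∑ s' : S, P s s' = 1) (s : S)
    (hs : s ∉ T) (h0 : ∀ s', s' ≠ s → P s s' = 0) : reachProb P T s = 0 := by
  rw [reach_eq P T hnn hrow s, rP_absorb _ T s hs
    (fun s' hne => by rw [h0 s' hne, ENNReal.ofReal_zero]), ENNReal.toReal_zero]

end Interface



open MvPolynomial

variable {k m : ℕ}

def cEquiv (k m : ℕ) : CState k m ≃ (Fin (k+1) ⊕ Fin k ⊕ Fin k ⊕ Fin m ⊕ Bool) where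
  toFun s := match s with
    | .v i => Sum.inl i
    | .pos a => Sum.inr (Sum.inl a)
    | .neg a => Sum.inr (Sum.inr (Sum.inl a))
    | .clause i => Sum.inr (Sum.inr (Sum.inr (Sum.inl i)))
    | .target => Sum.inr (Sum.inr (Sum.inr (Sum.inr true)))
    | .sink => Sum.inr (Sum.inr (Sum.inr (Sum.inr false)))
  invFun x := match x with
    | Sum.inl i => .v i
    | Sum.inr (Sum.inl a) => .pos a
    | Sum.inr (Sum.inr (Sum.inl a)) => .neg a
    | Sum.inr (Sum.inr (Sum.inr (Sum.inl i))) => .clause i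
    | Sum.inr (Sum.inr (Sum.inr (Sum.inr true))) => .target
    | Sum.inr (Sum.inr (Sum.inr (Sum.inr false))) => .sink
  left_inv s := by cases s <;> rfl
  right_inv x := by
    rcases x with i | a | a | i | b
    · rfl
    · rfl
    · rfl
    · rfl
    · cases b <;> rfl

instance : Fintype (CState k m) := Fintype.ofEquiv _ (cEquiv k m).symm

lemma sum_cstate {M : Type*} [AddCommMonoid M] (f : CState k m → M) :
    ∑ s : CState k m, f s
      = (∑ i, f (.v i)) + (∑ a, f (.pos a)) + (∑ a, f (.neg a))
        + (∑ i, f (.clause i)) + f .target + f .sink := by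
  rw [Fintype.sum_equiv (cEquiv k m) f (fun x => f ((cEquiv k m).symm x))
    (fun s => by cases s <;> rfl)]
  simp only [Fintype.sum_sum_type, Fintype.sum_bool]
  simp only [show ∀ i : Fin (k+1), (cEquiv k m).symm (Sum.inl i) = CState.v i from fun _ => rfl,
    show ∀ a : Fin k, (cEquiv k m).symm (Sum.inr (Sum.inl a)) = CState.pos a from fun _ => rfl,
    show ∀ a : Fin k, (cEquiv k m).symm (Sum.inr (Sum.inr (Sum.inl a))) = CState.neg a
      from fun _ => rfl,
    show ∀ i : Fin m, (cEquiv k m).symm (Sum.inr (Sum.inr (Sum.inr (Sum.inl i))))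
      = CState.clause i from fun _ => rfl,
    show (cEquiv k m).symm (Sum.inr (Sum.inr (Sum.inr (Sum.inr true)))) = CState.target from rfl,
    show (cEquiv k m).symm (Sum.inr (Sum.inr (Sum.inr (Sum.inr false)))) = CState.sink from rfl]
  abel

noncomputable def W (ψ : Fin m → Fin 3 → Lit k) (val : CParam k m → ℝ) :
    CState k m → CState k m → ℝ :=
  fun s s' => (MvPolynomial.aeval val (chonevP k m ψ s s') : ℝ)

variable (ψ : Fin m → Fin 3 → Lit k) (val : CParam k m → ℝ)

lemma clause_sum (i : Fin m) (G : Fin 3 → ℝ) (H : Lit k → ℝ) :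
    (∑ a : Fin k, (∑ j : Fin 3, if ψ i j = (true, a) then G j else 0) * H (true, a))
    + (∑ a : Fin k, (∑ j : Fin 3, if ψ i j = (false, a) then G j else 0) * H (false, a))
    = ∑ j : Fin 3, G j * H (ψ i j) := by
  have h1 : ∀ b : Bool,
      (∑ a : Fin k, (∑ j : Fin 3, if ψ i j = (b, a) then G j else 0) * H (b, a))
      = ∑ j : Fin 3, if (ψ i j).1 = b then G j * H (ψ i j) else 0 := by
    intro b
    rw [Finset.sum_congr rfl (fun a _ => Finset.sum_mul _ _ _), Finset.sum_comm]
    refine Finset.sum_congr rfl fun j _ => ?_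
    rcases hl : ψ i j with ⟨b₀, a₀⟩
    simp only [hl, Prod.mk.injEq]
    by_cases hb : b₀ = b
    · subst hb
      simp [ite_and, ite_mul, Finset.sum_ite_eq]
    · simp [hb, Ne.symm hb]
  rw [h1 true, h1 false, ← Finset.sum_add_distrib]
  refine Finset.sum_congr rfl fun j _ => ?_
  cases hb : (ψ i j).1 <;> simp [hb]

lemma W_nonneg (hWD : ChonevWD val) : ∀ s s', 0 ≤ W ψ val s s' := by
  have hb : ∀ p, 0 ≤ val p ∧ val p ≤ 1 := fun p => Set.mem_Icc.mp (hWD.1 p)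
  intro s s'
  cases s <;> cases s' <;>
    (try simp [W, chonevP, apply_ite (MvPolynomial.aeval val)])
  all_goals (try refine Finset.sum_nonneg fun j _ => ?_)
  all_goals (try split_ifs)
  all_goals
    first
    | exact (hb _).1
    | exact (hb _).2
    | exact sub_nonneg.mpr (hb _).2
    | positivity

lemma val_eq_iff₁ (i : Fin (k+1)) (h : (i:ℕ) < k) (a : Fin k) :
    ((i:ℕ) = (a:ℕ)) ↔ a = ⟨(i:ℕ), h⟩ := by
  simp [Fin.ext_iff]; omega

lemma val_eq_iff₂ (a : Fin k) (j : Fin (k+1)) : ((j:ℕ) = (a:ℕ)+1) ↔ j = a.succ := by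
  simp [Fin.ext_iff]

lemma W_rowsum (hWD : ChonevWD val) : ∀ s, ∑ s' : CState k m, W ψ val s s' = 1 := by
  have hy := hWD.2
  intro s
  rw [sum_cstate]
  cases s with
  | v i =>
    by_cases hik : (i:ℕ) = k
    · simp [W, chonevP, apply_ite (MvPolynomial.aeval val), hik,
        show ∀ a : Fin k, ((k = (a:ℕ)) ↔ False) from
          fun a => iff_false_intro (by have := a.isLt; omega),
        Finset.sum_const, Finset.card_univ]
      field_simp
    · have hik' : (i:ℕ) < k := by have := i.isLt; omega
      simp [W, chonevP, apply_ite (MvPolynomial.aeval val), hik,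
        val_eq_iff₁ i hik', Finset.sum_ite_eq']
  | pos a =>
    simp [W, chonevP, apply_ite (MvPolynomial.aeval val), val_eq_iff₂ a, Finset.sum_ite_eq']
  | neg a =>
    simp [W, chonevP, apply_ite (MvPolynomial.aeval val), val_eq_iff₂ a, Finset.sum_ite_eq']
  | clause i =>
    have hc := clause_sum ψ i (fun j => val (.y i j)) (fun _ => 1)
    simp only [mul_one] at hc
    simp only [W, chonevP, map_sum, apply_ite (MvPolynomial.aeval val), map_zero,
      MvPolynomial.aeval_X]
    simp only [map_zero, Finset.sum_const_zero, add_zero, zero_add, map_one]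
    rw [hc, Fin.sum_univ_three]
    exact hy i
  | target =>
    simp [W, chonevP]
  | sink =>
    simp [W, chonevP]

section U

variable {ψ : Fin m → Fin 3 → Lit k} {val : CParam k m → ℝ}

noncomputable def u (ψ : Fin m → Fin 3 → Lit k) (val : CParam k m → ℝ) :
    CState k m → ℝ := reachProb (W ψ val) {CState.target}

lemma u_nonneg (hWD : ChonevWD val) (s : CState k m) : 0 ≤ u ψ val s :=
  reach_nonneg _ _ (W_nonneg ψ val hWD) s

lemma u_le_one (hWD : ChonevWD val) (s : CState k m) : u ψ val s ≤ 1 :=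
  reach_le_one _ _ (W_nonneg ψ val hWD) (W_rowsum ψ val hWD) s

lemma u_target (hWD : ChonevWD val) : u ψ val .target = 1 :=
  reach_mem _ _ (W_nonneg ψ val hWD) (W_rowsum ψ val hWD) _ rfl

lemma u_sink (hWD : ChonevWD val) : u ψ val .sink = 0 := by
  refine reach_absorb _ _ (W_nonneg ψ val hWD) (W_rowsum ψ val hWD) _ (by simp) ?_
  intro s' hne
  cases s' <;> first | exact absurd rfl hne | simp [W, chonevP]

lemma u_step (hWD : ChonevWD val) (s : CState k m) (hs : s ≠ CState.target) :
    u ψ val s = ∑ s' : CState k m, W ψ val s s' * u ψ val s' :=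
  reach_step _ _ (W_nonneg ψ val hWD) (W_rowsum ψ val hWD) s (by simpa using hs)

lemma u_v (hWD : ChonevWD val) (a : Fin k) : u ψ val (.v a.castSucc)
    = val (.xt a) * u ψ val (.pos a) + (1 - val (.xt a)) * u ψ val (.neg a) := by
  rw [u_step hWD _ (by simp), sum_cstate]
  simp [W, chonevP, apply_ite (MvPolynomial.aeval val), ite_mul, a.isLt.ne,
    show ∀ a' : Fin k, (((a : ℕ) = (a' : ℕ)) ↔ a' = a) from
      fun a' => by rw [Fin.ext_iff]; exact eq_comm,
    Finset.sum_ite_eq']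

lemma u_pos (hWD : ChonevWD val) (a : Fin k) : u ψ val (.pos a) = val (.xt a) * u ψ val (.v a.succ) := by
  rw [u_step hWD _ (by simp), sum_cstate]
  simp [W, chonevP, apply_ite (MvPolynomial.aeval val), ite_mul, val_eq_iff₂ a,
    Finset.sum_ite_eq', u_sink hWD]

lemma u_neg (hWD : ChonevWD val) (a : Fin k) : u ψ val (.neg a) = (1 - val (.xt a)) * u ψ val (.v a.succ) := by
  rw [u_step hWD _ (by simp), sum_cstate]
  simp [W, chonevP, apply_ite (MvPolynomial.aeval val), ite_mul, val_eq_iff₂ a,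
    Finset.sum_ite_eq', u_sink hWD]

lemma u_vk (hWD : ChonevWD val) : u ψ val (.v (Fin.last k))
    = ((m:ℝ)+1)⁻¹ * (1 + ∑ i : Fin m, u ψ val (.clause i)) := by
  rw [u_step hWD _ (by simp), sum_cstate]
  simp [W, chonevP, apply_ite (MvPolynomial.aeval val), Fin.val_last, ite_mul,
    show ∀ a : Fin k, ((k = (a : ℕ)) ↔ False) from
      fun a => iff_false_intro (by have := a.isLt; omega),
    u_target hWD]
  rw [mul_add, mul_one, Finset.mul_sum]
  exact add_comm _ _

lemma u_clause (hWD : ChonevWD val) (i : Fin m) : u ψ val (.clause i)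
    = ∑ j : Fin 3, val (.y i j) *
        (if (ψ i j).1 then u ψ val (.pos (ψ i j).2) else u ψ val (.neg (ψ i j).2)) := by
  rw [u_step hWD _ (by simp), sum_cstate]
  simp only [W, chonevP, map_sum, apply_ite (MvPolynomial.aeval val), map_zero,
    MvPolynomial.aeval_X, map_one, zero_mul, mul_zero, Finset.sum_const_zero,
    add_zero, zero_add, one_mul, mul_one]
  have hc := clause_sum ψ i (fun j => val (.y i j))
    (fun l => if l.1 then u ψ val (.pos l.2) else u ψ val (.neg l.2))
  simpa using hc

end U

lemma forward {k m : ℕ} (ψ : Fin m → Fin 3 → Lit k) (σ : Fin k → Bool)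
    (hσ : ∀ i, ∃ j, litBool σ (ψ i j) = true) :
    ∃ val : CParam k m → ℝ, ChonevWD val ∧ u ψ val (.v 0) = 1 := by
  classical
  choose jst hjst using hσ
  set val : CParam k m → ℝ := fun p =>
    match p with
    | .xt a => if σ a then 1 else 0
    | .y i j => if j = jst i then 1 else 0
    with hval
  have hxt : ∀ a, val (.xt a) = if σ a then 1 else 0 := fun a => rfl
  have hyv : ∀ i j, val (.y i j) = if j = jst i then 1 else 0 := fun i j => rfl
  have hWD : ChonevWD val := by
    refine ⟨fun p => ?_, fun i => ?_⟩
    · rw [Set.mem_Icc]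
      cases p with
      | xt a => rw [hxt a]; split_ifs <;> norm_num
      | y i j => rw [hyv i j]; split_ifs <;> norm_num
    · have h3 : ∑ j : Fin 3, val (.y i j) = 1 := by
        simp [hyv, Finset.sum_ite_eq']
      rwa [Fin.sum_univ_three] at h3
  refine ⟨val, hWD, ?_⟩
  have hchain : ∀ a : Fin k, u ψ val (.v a.castSucc) = u ψ val (.v a.succ) := by
    intro a
    rw [u_v hWD a, u_pos hWD a, u_neg hWD a, hxt a]
    by_cases hs : σ a <;> simp [hs]
  have hreach : ∀ (d n : ℕ) (h : n + d = k),
      u ψ val (.v ⟨n, by omega⟩) = u ψ val (.v (Fin.last k)) := by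
    intro d
    induction d with
    | zero =>
      intro n h
      have : (⟨n, by omega⟩ : Fin (k+1)) = Fin.last k := by
        apply Fin.ext; simp [Fin.val_last]; omega
      rw [this]
    | succ d ih =>
      intro n h
      have hn : n < k := by omega
      rw [show (⟨n, by omega⟩ : Fin (k+1)) = (⟨n, hn⟩ : Fin k).castSucc from rfl,
        hchain ⟨n, hn⟩,
        show (⟨n, hn⟩ : Fin k).succ = (⟨n+1, by omega⟩ : Fin (k+1)) from rfl]
      exact ih (n+1) (by omega)
  have hl2 : ∀ a : Fin k, u ψ val (.v a.succ) = u ψ val (.v (Fin.last k)) := by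
    intro a
    have hak := a.isLt
    have h := hreach (k - ((a:ℕ)+1)) ((a:ℕ)+1) (by omega)
    rwa [show (⟨(a:ℕ)+1, by omega⟩ : Fin (k+1)) = a.succ from rfl] at h
  have hclause : ∀ i : Fin m, u ψ val (.clause i) = u ψ val (.v (Fin.last k)) := by
    intro i
    rw [u_clause hWD i]
    have hcol : ∑ j : Fin 3, val (.y i j) * (if (ψ i j).1 then u ψ val (.pos (ψ i j).2)
          else u ψ val (.neg (ψ i j).2))
        = (if (ψ i (jst i)).1 then u ψ val (.pos (ψ i (jst i)).2)
          else u ψ val (.neg (ψ i (jst i)).2)) := by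
      have hterm : ∀ x : Fin 3, val (.y i x) * (if (ψ i x).1 then u ψ val (.pos (ψ i x).2)
            else u ψ val (.neg (ψ i x).2))
          = if x = jst i then (if (ψ i x).1 then u ψ val (.pos (ψ i x).2)
            else u ψ val (.neg (ψ i x).2)) else 0 := by
        intro x; rw [hyv i x, ite_mul, one_mul, zero_mul]
      rw [Finset.sum_congr rfl fun x _ => hterm x,
        Finset.sum_ite_eq' Finset.univ (jst i) _, if_pos (Finset.mem_univ _)]
    rw [hcol]
    have hb := hjst i
    rcases hl : ψ i (jst i) with ⟨b, a⟩
    rw [hl] at hb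
    cases b with
    | true =>
      have hσa : σ a = true := by simpa [litBool] using hb
      simp only [show (((true, a) : Lit k).1 = true) = True from by simp, if_true]
      rw [u_pos hWD a, hxt a, if_pos hσa, one_mul, hl2 a]
    | false =>
      have hσa : σ a = false := by simpa [litBool] using hb
      simp only [show (((false, a) : Lit k).1 = true) = False from by simp, if_false]
      rw [u_neg hWD a, hxt a, hσa, hl2 a]
      norm_num
  have hvk : u ψ val (.v (Fin.last k)) = 1 := by
    have he := u_vk hWD (ψ := ψ) (val := val)
    rw [Finset.sum_congr rfl (fun i _ => hclause i), Finset.sum_const, Finset.card_univ,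
      Fintype.card_fin, nsmul_eq_mul] at he
    have hm : ((m:ℝ)+1) ≠ 0 := by positivity
    field_simp at he
    linarith
  have h0 := hreach k 0 (by omega)
  have he0 : (⟨0, by omega⟩ : Fin (k+1)) = 0 := by apply Fin.ext; simp
  rw [he0] at h0
  rw [h0, hvk]


lemma backward {k m : ℕ} (ψ : Fin m → Fin 3 → Lit k) (val : CParam k m → ℝ)
    (hWD : ChonevWD val) (h1 : u ψ val (.v 0) = 1) :
    ∃ σ : Fin k → Bool, ∀ i, ∃ j, litBool σ (ψ i j) = true := by
  classical
  have hb : ∀ p, 0 ≤ val p ∧ val p ≤ 1 := fun p => Set.mem_Icc.mp (hWD.1 p)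
  have hA : ∀ a : Fin k, u ψ val (.v a.castSucc)
      = (val (.xt a) * val (.xt a) + (1 - val (.xt a)) * (1 - val (.xt a)))
        * u ψ val (.v a.succ) := by
    intro a
    rw [u_v hWD a, u_pos hWD a, u_neg hWD a]; ring
  have hone : ∀ (n : ℕ) (h : n ≤ k), u ψ val (.v ⟨n, by omega⟩) = 1 := by
    intro n
    induction n with
    | zero =>
      intro h
      have he0 : (⟨0, by omega⟩ : Fin (k+1)) = 0 := by apply Fin.ext; simp
      rw [he0]; exact h1
    | succ n ih =>
      intro h
      have hn : n < k := by omega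
      have hprev := ih (by omega)
      have hAa := hA ⟨n, hn⟩
      rw [show (⟨n, hn⟩ : Fin k).castSucc = (⟨n, by omega⟩ : Fin (k+1)) from rfl, hprev] at hAa
      rw [show (⟨n, hn⟩ : Fin k).succ = (⟨n+1, by omega⟩ : Fin (k+1)) from rfl] at hAa
      have hc0 := (hb (.xt ⟨n, hn⟩)).1
      have hc1 := (hb (.xt ⟨n, hn⟩)).2
      have hu0 := u_nonneg hWD (ψ := ψ) (CState.v (⟨n+1, by omega⟩ : Fin (k+1)))
      have hu1 := u_le_one hWD (ψ := ψ) (CState.v (⟨n+1, by omega⟩ : Fin (k+1)))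
      have hge : (1:ℝ) ≤ u ψ val (.v (⟨n+1, by omega⟩ : Fin (k+1))) := by
        nlinarith [mul_nonneg (mul_nonneg hc0 (by linarith : (0:ℝ) ≤ 1 - val (.xt ⟨n, hn⟩))) hu0]
      linarith
  have hbool : ∀ a : Fin k, val (.xt a) = 0 ∨ val (.xt a) = 1 := by
    intro a
    have hia := a.isLt
    have hcast := hone (a:ℕ) (by omega)
    have hsucc := hone ((a:ℕ)+1) (by omega)
    have hAa := hA a
    rw [show a.castSucc = (⟨(a:ℕ), by omega⟩ : Fin (k+1)) from rfl, hcast,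
      show a.succ = (⟨(a:ℕ)+1, by omega⟩ : Fin (k+1)) from rfl, hsucc, mul_one] at hAa
    have hz : val (.xt a) * (1 - val (.xt a)) = 0 := by nlinarith
    rcases mul_eq_zero.mp hz with h | h
    · exact Or.inl h
    · exact Or.inr (by linarith)
  set σ : Fin k → Bool := fun a => decide (val (.xt a) = 1) with hσ
  have hvk1 : u ψ val (.v (Fin.last k)) = 1 := by
    have h := hone k le_rfl
    rwa [show (⟨k, by omega⟩ : Fin (k+1)) = Fin.last k from rfl] at h
  have hsum := u_vk hWD (ψ := ψ) (val := val)
  rw [hvk1] at hsum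
  have hcl : ∀ i : Fin m, u ψ val (.clause i) = 1 := by
    have hm : (0:ℝ) < (m:ℝ)+1 := by positivity
    have hsum' : ∑ i : Fin m, u ψ val (.clause i) = m := by
      field_simp at hsum
      linarith
    intro i
    have hz : ∑ j : Fin m, (1 - u ψ val (.clause j)) = 0 := by
      rw [Finset.sum_sub_distrib, hsum']
      simp
    have hnn : ∀ j ∈ Finset.univ, (0:ℝ) ≤ 1 - u ψ val (.clause j) :=
      fun j _ => by linarith [u_le_one hWD (ψ := ψ) (CState.clause j)]
    have := (Finset.sum_eq_zero_iff_of_nonneg hnn).mp hz i (Finset.mem_univ i)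
    linarith
  refine ⟨σ, fun i => ?_⟩
  have hci := u_clause (ψ := ψ) hWD i
  rw [hcl i] at hci
  have hlit : ∀ j : Fin 3, (if (ψ i j).1 then u ψ val (.pos (ψ i j).2)
        else u ψ val (.neg (ψ i j).2))
      = (if (ψ i j).1 then val (.xt (ψ i j).2) else 1 - val (.xt (ψ i j).2)) := by
    intro j
    have hia := (ψ i j).2.isLt
    have hsucc : u ψ val (.v (ψ i j).2.succ) = 1 := by
      have h := hone (((ψ i j).2 : ℕ)+1) (by omega)
      rwa [show (⟨((ψ i j).2 : ℕ)+1, by omega⟩ : Fin (k+1)) = (ψ i j).2.succ from rfl] at h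
    rw [u_pos hWD, u_neg hWD, hsucc, mul_one, mul_one]
  rw [Finset.sum_congr rfl (fun j _ => by rw [hlit j])] at hci
  by_contra hno
  push_neg at hno
  have hlv0 : ∀ j : Fin 3, (if (ψ i j).1 then val (.xt (ψ i j).2)
      else 1 - val (.xt (ψ i j).2)) = 0 := by
    intro j
    have hnb := hno j
    rcases hl : ψ i j with ⟨b, a⟩
    rw [hl] at hnb
    have hnb' : σ a ≠ true → val (.xt a) = 0 := by
      intro hne
      rcases hbool a with h | h
      · exact h
      · exact absurd (by simp [hσ, h]) hne
    cases b with
    | true =>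
      have hσa : σ a ≠ true := by simpa [litBool] using hnb
      simp only [show (((true, a) : Lit k).1 = true) = True from by simp, if_true]
      exact hnb' hσa
    | false =>
      have hσa : σ a = true := by simpa [litBool] using hnb
      have hv1 : val (.xt a) = 1 := by simpa [hσ] using hσa
      simp only [show (((false, a) : Lit k).1 = true) = False from by simp, if_false]
      rw [hv1]; ring
  rw [Finset.sum_congr rfl (fun j _ => by rw [hlv0 j, mul_zero])] at hci
  simp at hci

end Chonev15

/-- Proposition 15 of the paper: a 3-CNF formula `ψ` is satisfiable iff some well-defined
valuation of the Chonev pMC `D_ψ` reaches the target `T★` from `v₀` with probability `1`. -/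
theorem threeSat_iff_chonev_almost_sure (k m : ℕ) (ψ : Fin m → Fin 3 → Lit k) :
    (∃ σ : Fin k → Bool, ∀ i, ∃ j, litBool σ (ψ i j) = true) ↔
    (∃ val : CParam k m → ℝ, ChonevWD val ∧
      reachProb (fun s s' => (MvPolynomial.aeval val (chonevP k m ψ s s') : ℝ))
        {CState.target} (CState.v 0) = 1) := by
  constructor
  · rintro ⟨σ, hσ⟩
    obtain ⟨val, hWD, hu⟩ := Chonev15.forward ψ σ hσ
    exact ⟨val, hWD, hu⟩
  · rintro ⟨val, hWD, hu⟩
    exact Chonev15.backward ψ val hWD hu
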